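/- Let λ₁, λ₂, λ₃ > 0, θ > 0, c₁, c₂, c₃ > 0, u* ∈ ℝ, and write φᵢ = φ_{λᵢ} where φ_λ(x) = λ(e^x − 1). Let η₁, η₂, η₃ : [0,∞) → ℝ be differentiable, let φ̂₁, φ̂₂, φ̂₃ : [0,∞) → ℝ be arbitrary functions, and set z₁ = η₃ − η₂, z₂ = η₁ − z₁. Assume φ₁(z₂(t)) ≠ 0 for all t and that the perturbed closed-loop system η₁′ = u* − u − φ̂₂, η₂′ = −φ̂₃, η₃′ = −φ̂₁ holds, where u = u* + (1/φ₁(z₂))·(c₃·φ₁(z₂)² + θc₁·φ₂(η₂)² + θc₂·φ₃(z₁)²) + ((φ₁(z₂) − θφ₃(z₁))/φ₁(z₂))·φ₁(η₁) − φ₂(η₂) + ((θφ₃(z₁) − φ₁(z₂) − θφ₂(η₂))/φ₁(z₂))·φ₃(η₃). Then, with V₃(η₂, z₁, z₂) = θλ₂ω̃(η₂) + θλ₃ω̃(z₁) + λ₁ω̃(z₂), ω̃(x) = e^x − 1 − x, one has d/dt V₃ = −θc₁·φ₂(η₂)² − θc₂·φ₃(z₁)² − c₃·φ₁(z₂)²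 + A₁·(φ̂₁ − φ₁(η₁)) + A₂·(φ̂₂ − φ₂(η₂)) + A₃·(φ̂₃ − φ₃(η₃)), where A₁ = φ₁(z₂) − θφ₃(z₁), A₂ = −φ₁(z₂), A₃ = θφ₃(z₁) − φ₁(z₂) − θφ₂(η₂). -/

import Mathlib

/-- `φ_λ(x) = λ(e^x − 1)`. -/
noncomputable def phiL (l x : ℝ) : ℝ := l * (Real.exp x - 1)

/-- `ω̃(x) = e^x − 1 − x`. -/
noncomputable def omegaTilde (x : ℝ) : ℝ := Real.exp x - 1 - x

/-
Along a trajectory, `d/dt [λ ω̃(f)] = φ_λ(f) · f'`, so `dV₃/dt` is a combination of the three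
right-hand sides of the closed loop with the coefficients `θφ₂(η₂)`, `θφ₃(z₁)` and `φ₁(z₂)`.
The feedback `u` is built so that `φ₁(z₂)·(u* − u)` cancels every unperturbed cross term and
leaves the negative squares; what remains is the mismatch `φ̂ᵢ − φᵢ(ηᵢ)`.
-/

open Set

lemma phiL_mul_left (a l x : ℝ) : phiL (a * l) x = a * phiL l x := by
  unfold phiL; ring

lemma hasDerivAt_omegaTilde (x : ℝ) : HasDerivAt omegaTilde (Real.exp x - 1) x :=
  ((Real.hasDerivAt_exp x).sub_const 1).sub (hasDerivAt_id x)

lemma HasDerivWithinAt.const_mul_omegaTilde {f : ℝ → ℝ} {f' : ℝ} {s : Set ℝ} {t : ℝ}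
    (l : ℝ) (hf : HasDerivWithinAt f f' s t) :
    HasDerivWithinAt (fun x => l * omegaTilde (f x)) (phiL l (f t) * f') s t := by
  have := ((hasDerivAt_omegaTilde (f t)).comp_hasDerivWithinAt t hf).const_mul l
  rwa [← mul_assoc] at this

lemma mul_sub_feedback {θ c1 c2 c3 ustar u p q r e1 e3 : ℝ} (hp : p ≠ 0)
    (hu : u = ustar + (1 / p) * (c3 * p ^ 2 + θ * c1 * r ^ 2 + θ * c2 * q ^ 2)
      + ((p - θ * q) / p) * e1 - r + ((θ * q - p - θ * r) / p) * e3) :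
    p * (ustar - u) = -(c3 * p ^ 2 + θ * c1 * r ^ 2 + θ * c2 * q ^ 2)
      - (p - θ * q) * e1 + p * r - (θ * q - p - θ * r) * e3 := by
  subst hu
  field_simp
  ring

theorem stmt3_general (l1 l2 l3 θ c1 c2 c3 ustar : ℝ)
    (η1 η2 η3 z1 z2 u : ℝ → ℝ)
    (phat1 phat2 phat3 : ℝ → ℝ)
    (hz1 : ∀ t, z1 t = η3 t - η2 t)
    (hz2 : ∀ t, z2 t = η1 t - z1 t)
    (hne : ∀ t, 0 ≤ t → phiL l1 (z2 t) ≠ 0)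
    (hu : ∀ t, u t = ustar
      + (1 / phiL l1 (z2 t)) *
          (c3 * (phiL l1 (z2 t))^2 + θ * c1 * (phiL l2 (η2 t))^2
            + θ * c2 * (phiL l3 (z1 t))^2)
      + ((phiL l1 (z2 t) - θ * phiL l3 (z1 t)) / phiL l1 (z2 t)) * phiL l1 (η1 t)
      - phiL l2 (η2 t)
      + ((θ * phiL l3 (z1 t) - phiL l1 (z2 t) - θ * phiL l2 (η2 t)) / phiL l1 (z2 t))
          * phiL l3 (η3 t))
    (hd1 : ∀ t, 0 ≤ t →
      HasDerivWithinAt η1 (ustar - u t - phat2 t) (Set.Ici 0) t)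
    (hd2 : ∀ t, 0 ≤ t →
      HasDerivWithinAt η2 (-(phat3 t)) (Set.Ici 0) t)
    (hd3 : ∀ t, 0 ≤ t →
      HasDerivWithinAt η3 (-(phat1 t)) (Set.Ici 0) t) :
    ∀ t, 0 ≤ t → HasDerivWithinAt
      (fun s => θ * l2 * omegaTilde (η2 s) + θ * l3 * omegaTilde (z1 s)
        + l1 * omegaTilde (z2 s))
      (-(θ * c1 * (phiL l2 (η2 t))^2) - θ * c2 * (phiL l3 (z1 t))^2
        - c3 * (phiL l1 (z2 t))^2
        + (phiL l1 (z2 t) - θ * phiL l3 (z1 t)) * (phat1 t - phiL l1 (η1 t))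
        + (-(phiL l1 (z2 t))) * (phat2 t - phiL l2 (η2 t))
        + (θ * phiL l3 (z1 t) - phiL l1 (z2 t) - θ * phiL l2 (η2 t))
            * (phat3 t - phiL l3 (η3 t)))
      (Set.Ici 0) t := by
  intro t ht
  have dz1 : HasDerivWithinAt z1 (-(phat1 t) - -(phat3 t)) (Ici 0) t :=
    funext hz1 ▸ (hd3 t ht).sub (hd2 t ht)
  have dz2 : HasDerivWithinAt z2 (ustar - u t - phat2 t - (-(phat1 t) - -(phat3 t))) (Ici 0) t :=
    funext hz2 ▸ (hd1 t ht).sub dz1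
  refine ((((hd2 t ht).const_mul_omegaTilde (θ * l2)).add
    (dz1.const_mul_omegaTilde (θ * l3))).add (dz2.const_mul_omegaTilde l1)).congr_deriv ?_
  rw [phiL_mul_left, phiL_mul_left]
  linear_combination mul_sub_feedback (hne t ht) (hu t)

/-- Lyapunov derivative identity (equation (aa3.81)) of Theorem 3.4: for the
three-species closed loop with perturbed interaction terms `φ̂ᵢ`,
`d/dt V₃ = −θc₁φ₂(η₂)² − θc₂φ₃(z₁)² − c₃φ₁(z₂)²
  + A₁(φ̂₁ − φ₁(η₁)) + A₂(φ̂₂ − φ₂(η₂)) + A₃(φ̂₃ − φ₃(η₃))`. -/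
theorem stmt3 (l1 l2 l3 θ c1 c2 c3 ustar : ℝ)
    (hl1 : 0 < l1) (hl2 : 0 < l2) (hl3 : 0 < l3) (hθ : 0 < θ)
    (hc1 : 0 < c1) (hc2 : 0 < c2) (hc3 : 0 < c3)
    (η1 η2 η3 z1 z2 u : ℝ → ℝ)
    (phat1 phat2 phat3 : ℝ → ℝ)
    (hz1 : ∀ t, z1 t = η3 t - η2 t)
    (hz2 : ∀ t, z2 t = η1 t - z1 t)
    (hne : ∀ t, 0 ≤ t → phiL l1 (z2 t) ≠ 0)
    (hu : ∀ t, u t = ustar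
      + (1 / phiL l1 (z2 t)) *
          (c3 * (phiL l1 (z2 t))^2 + θ * c1 * (phiL l2 (η2 t))^2
            + θ * c2 * (phiL l3 (z1 t))^2)
      + ((phiL l1 (z2 t) - θ * phiL l3 (z1 t)) / phiL l1 (z2 t)) * phiL l1 (η1 t)
      - phiL l2 (η2 t)
      + ((θ * phiL l3 (z1 t) - phiL l1 (z2 t) - θ * phiL l2 (η2 t)) / phiL l1 (z2 t))
          * phiL l3 (η3 t))
    (hd1 : ∀ t, 0 ≤ t →
      HasDerivWithinAt η1 (ustar - u t - phat2 t) (Set.Ici 0) t)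
    (hd2 : ∀ t, 0 ≤ t →
      HasDerivWithinAt η2 (-(phat3 t)) (Set.Ici 0) t)
    (hd3 : ∀ t, 0 ≤ t →
      HasDerivWithinAt η3 (-(phat1 t)) (Set.Ici 0) t) :
    ∀ t, 0 ≤ t → HasDerivWithinAt
      (fun s => θ * l2 * omegaTilde (η2 s) + θ * l3 * omegaTilde (z1 s)
        + l1 * omegaTilde (z2 s))
      (-(θ * c1 * (phiL l2 (η2 t))^2) - θ * c2 * (phiL l3 (z1 t))^2
        - c3 * (phiL l1 (z2 t))^2
        + (phiL l1 (z2 t) - θ * phiL l3 (z1 t)) * (phat1 t - phiL l1 (η1 t))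
        + (-(phiL l1 (z2 t))) * (phat2 t - phiL l2 (η2 t))
        + (θ * phiL l3 (z1 t) - phiL l1 (z2 t) - θ * phiL l2 (η2 t))
            * (phat3 t - phiL l3 (η3 t)))
      (Set.Ici 0) t :=
  stmt3_general l1 l2 l3 θ c1 c2 c3 ustar η1 η2 η3 z1 z2 u phat1 phat2 phat3 hz1 hz2 hne hu hd1 hd2
    hd3
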